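/- arXiv:1906.05851 — 7 statements merged into one kernel-verified Lean document; each statement's English description precedes it below -/
import Mathlib

section
/- For every n ≥ 2, the characteristic polynomial of the rational n×n matrix B_n = D_n + T_n equals the product ∏ (X − k), taken over all integers k with −1 ≤ k ≤ n−1 and k ≠ ⌊n/2⌋ − 1. In particular, the spectrum of B_n is {n−1, n−2, …, 1, 0, −1} \ {⌊n/2⌋ − 1}, with every eigenvalue simple. -/
/-- The quotient matrix `B_n = D_n + T_n` of the pancake graph `P(n)`, over `ℚ`
(one-based index `i` corresponds to `i−1 : Fin n`): `D_n` is diagonal with entries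
`n−1−i` and `(T_n)_{ij} = 1` iff `i + j ≥ n + 1`. -/
def Bn (n : ℕ) : Matrix (Fin n) (Fin n) ℚ :=
  Matrix.diagonal (fun i : Fin n => (n : ℚ) - 2 - i.val)
    + Matrix.of (fun i j : Fin n => if n ≤ i.val + j.val + 1 then 1 else 0)

section PancakeQuotientSpectrum

open Polynomial Matrix Finset

lemma tele (w : ℕ → ℚ) {c n : ℕ} (h : c ≤ n) :
    ∑ j ∈ Finset.Ico c n, (w j - w (j+1)) = w c - w n := by
  rw [Finset.sum_Ico_eq_sub _ h, Finset.sum_range_sub' w, Finset.sum_range_sub' w]; ring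

lemma mulVec_tele (n : ℕ) (w : ℕ → ℚ) (i : Fin n) :
    ((Bn n).mulVec (fun j : Fin n => w j.val - w (j.val+1))) i
      = ((n:ℚ) - 2 - i.val) * (w i.val - w (i.val+1)) + (w (n-1-i.val) - w n) := by
  have hi : i.val < n := i.isLt
  unfold Bn
  rw [Matrix.mulVec, dotProduct]
  simp only [Matrix.add_apply, Matrix.diagonal_apply, Matrix.of_apply, add_mul,
    Finset.sum_add_distrib, ite_mul, zero_mul, one_mul]
  congr 1
  · rw [Finset.sum_ite_eq]; simp
  · rw [Fin.sum_univ_eq_sum_range (fun j => if n ≤ i.val + j + 1 then w j - w (j+1) else 0) n,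
      ← Finset.sum_filter]
    have : Finset.filter (fun j => n ≤ i.val + j + 1) (Finset.range n)
        = Finset.Ico (n-1-i.val) n := by
      ext j; simp [Finset.mem_filter, Finset.mem_Ico]; omega
    rw [this, tele w (by omega)]

noncomputable def wA (n m : ℕ) : ℕ → ℚ :=
  fun c => if m ≤ c ∧ c + m + 1 ≤ n then ((n:ℚ) - m - c) else 0

noncomputable def wB (n t : ℕ) : ℕ → ℚ :=
  fun c => if t ≤ c ∧ c + t + 1 ≤ n then ((c:ℚ) - t) else 0

lemma eigA (n m : ℕ) (hm : 2*m < n) :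
    (Bn n).mulVec (fun j : Fin n => wA n m j.val - wA n m (j.val+1))
      = ((n:ℚ) - 1 - m) • (fun j : Fin n => wA n m j.val - wA n m (j.val+1)) := by
  funext i
  have hi : i.val < n := i.isLt
  rw [mulVec_tele n (wA n m) i]
  simp only [Pi.smul_apply, smul_eq_mul]
  have hcast : ((n - 1 - i.val : ℕ) : ℚ) = (n:ℚ) - 1 - i.val := by
    have h1 : (n - 1 - i.val : ℕ) = n - (1 + i.val) := by omega
    rw [h1, Nat.cast_sub (by omega)]; push_cast; ring
  unfold wA
  split_ifs
  any_goals (exfalso; omega)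
  any_goals (push_cast [hcast]; ring)
  · -- boundary `i = n-1-m`
    have h' : i.val + m + 1 = n := by omega
    have e : ((i.val : ℚ)) + m + 1 = n := by exact_mod_cast congrArg (Nat.cast : ℕ → ℚ) h'
    push_cast [hcast]
    linear_combination ((i.val:ℚ) + 1 - m) * e
  · -- boundary `i = m-1`
    have h' : i.val + 1 = m := by omega
    have e : ((i.val : ℚ)) + 1 = m := by exact_mod_cast congrArg (Nat.cast : ℕ → ℚ) h'
    push_cast [hcast]
    linear_combination ((n:ℚ) - m - i.val - 1) * e

lemma eigB (n t : ℕ) (ht : 2*t + 2 ≤ n) :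
    (Bn n).mulVec (fun j : Fin n => wB n t j.val - wB n t (j.val+1))
      = ((t:ℚ) - 1) • (fun j : Fin n => wB n t j.val - wB n t (j.val+1)) := by
  funext i
  have hi : i.val < n := i.isLt
  rw [mulVec_tele n (wB n t) i]
  simp only [Pi.smul_apply, smul_eq_mul]
  have hcast : ((n - 1 - i.val : ℕ) : ℚ) = (n:ℚ) - 1 - i.val := by
    have h1 : (n - 1 - i.val : ℕ) = n - (1 + i.val) := by omega
    rw [h1, Nat.cast_sub (by omega)]; push_cast; ring
  unfold wB
  split_ifs
  any_goals (exfalso; omega)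
  any_goals (push_cast [hcast]; ring)
  · -- boundary `i = n-1-t`
    have h' : i.val + t + 1 = n := by omega
    have e : ((i.val : ℚ)) + t + 1 = n := by exact_mod_cast congrArg (Nat.cast : ℕ → ℚ) h'
    push_cast [hcast]
    linear_combination ((t:ℚ) - i.val - 1) * e
  · -- boundary `i = t-1`
    have h' : i.val + 1 = t := by omega
    have e : ((i.val : ℚ)) + 1 = t := by exact_mod_cast congrArg (Nat.cast : ℕ → ℚ) h'
    push_cast [hcast]
    linear_combination (-((n:ℚ)) + t + i.val + 1) * e

lemma charpoly_eval {N : ℕ} (M : Matrix (Fin N) (Fin N) ℚ) (x : ℚ) :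
    M.charpoly.eval x = (x • (1 : Matrix (Fin N) (Fin N) ℚ) - M).det := by
  rw [Matrix.charpoly, ← Polynomial.coe_evalRingHom, RingHom.map_det]
  congr 1
  ext i j
  by_cases h : i = j <;>
    simp [Matrix.charmatrix_apply, Matrix.one_apply, h, Matrix.smul_apply,
      Matrix.diagonal_apply]

lemma dvd_charpoly (n : ℕ) (hn : 2 ≤ n) (k : ℤ)
    (hk : k ∈ (Finset.Icc (-1 : ℤ) ((n : ℤ) - 1)).erase (((n / 2 : ℕ) : ℤ) - 1)) :
    (X - C (k : ℚ)) ∣ (Bn n).charpoly := by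
  rw [Finset.mem_erase, Finset.mem_Icc] at hk
  obtain ⟨hne, hlo, hhi⟩ := hk
  -- find an eigenvector
  have main : ∃ v : Fin n → ℚ, v ≠ 0 ∧ (Bn n).mulVec v = (k : ℚ) • v := by
    set u : ℕ := (k + 1).toNat with hu
    have hku : k = (u : ℤ) - 1 := by omega
    have hun : u ≤ n := by omega
    have hunez : u ≠ n / 2 := by omega
    have hkc : (k : ℚ) = (u : ℚ) - 1 := by
      rw [hku]; push_cast; ring
    rcases lt_or_gt_of_ne hunez with h | h
    · -- lower family, t = u
      refine ⟨fun j : Fin n => wB n u j.val - wB n u (j.val+1), ?_, ?_⟩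
      · intro hzero
        have := congrFun hzero ⟨n - 1 - u, by omega⟩
        simp only [Pi.zero_apply] at this
        unfold wB at this
        rw [if_pos (by constructor <;> omega), if_neg (by omega)] at this
        have hc : ((n - 1 - u : ℕ) : ℚ) = (n : ℚ) - 1 - u := by
          have h1 : (n - 1 - u : ℕ) = n - (1 + u) := by omega
          rw [h1, Nat.cast_sub (by omega)]; push_cast; ring
        rw [hc] at this
        have : (n : ℚ) - 1 - 2 * u = 0 := by linarith
        have h2 : ((n : ℚ)) = 2 * u + 1 := by linarith
        have : (n : ℤ) = 2 * u + 1 := by exact_mod_cast h2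
        omega
      · rw [hkc, eigB n u (by omega)]
    · -- upper family, m = n - u
      refine ⟨fun j : Fin n => wA n (n-u) j.val - wA n (n-u) (j.val+1), ?_, ?_⟩
      · intro hzero
        have := congrFun hzero ⟨n - 1 - (n - u), by omega⟩
        simp only [Pi.zero_apply] at this
        unfold wA at this
        rw [if_pos (by constructor <;> omega), if_neg (by omega)] at this
        have hc : ((n - 1 - (n - u) : ℕ) : ℚ) = (u : ℚ) - 1 := by
          have h1 : (n - 1 - (n - u) : ℕ) = u - 1 := by omega
          rw [h1, Nat.cast_sub (by omega)]; push_cast; ring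
        have hc2 : ((n - u : ℕ) : ℚ) = (n : ℚ) - u := by
          rw [Nat.cast_sub (by omega)]
        rw [hc, hc2] at this
        -- this : n - (n-u) - (u-1) - 0 = 0, i.e. 1 = 0
        simp at this
      · have := eigA n (n - u) (by omega)
        rw [this]
        congr 1
        have hc2 : ((n - u : ℕ) : ℚ) = (n : ℚ) - u := by
          rw [Nat.cast_sub (by omega)]
        rw [hkc, hc2]; ring
  obtain ⟨v, hv0, hv⟩ := main
  rw [Polynomial.dvd_iff_isRoot, Polynomial.IsRoot, charpoly_eval]
  rw [← Matrix.exists_mulVec_eq_zero_iff]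
  refine ⟨v, hv0, ?_⟩
  rw [Matrix.sub_mulVec, hv, Matrix.smul_mulVec, Matrix.one_mulVec]
  simp

/-- For `n ≥ 2`, the characteristic polynomial of `B_n` is
`∏ (X − k)` over the integers `−1 ≤ k ≤ n−1` with `k ≠ ⌊n/2⌋ − 1`; in particular the
spectrum of `B_n` is `{n−1, …, 1, 0, −1} \ {⌊n/2⌋−1}`, all eigenvalues being simple. -/
theorem stmt2 (n : ℕ) (hn : 2 ≤ n) :
    (Bn n).charpoly
      = ∏ k ∈ (Finset.Icc (-1 : ℤ) ((n : ℤ) - 1)).erase (((n / 2 : ℕ) : ℤ) - 1),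
          (Polynomial.X - Polynomial.C (k : ℚ)) := by
  set S := (Finset.Icc (-1 : ℤ) ((n : ℤ) - 1)).erase (((n / 2 : ℕ) : ℤ) - 1) with hS
  have hdvd : (∏ k ∈ S, (X - C (k : ℚ))) ∣ (Bn n).charpoly := by
    refine Finset.prod_dvd_of_coprime
      ((Polynomial.pairwise_coprime_X_sub_C (Int.cast_injective)).set_pairwise _)
      (fun k hk => dvd_charpoly n hn k hk)
  have hmem : (((n / 2 : ℕ) : ℤ) - 1) ∈ Finset.Icc (-1 : ℤ) ((n : ℤ) - 1) := by
    rw [Finset.mem_Icc]; constructor <;> omega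
  have hcard : S.card = n := by
    rw [hS, Finset.card_erase_of_mem hmem, Int.card_Icc]
    simp only [sub_neg_eq_add, sub_add_cancel]
    omega
  have hPmon : (∏ k ∈ S, (X - C (k : ℚ))).Monic :=
    Polynomial.monic_prod_of_monic _ _ (fun k _ => Polynomial.monic_X_sub_C _)
  have hPdeg : (∏ k ∈ S, (X - C (k : ℚ))).natDegree = n := by
    rw [Polynomial.natDegree_prod _ _ (fun k _ => Polynomial.X_sub_C_ne_zero _)]
    simp only [Polynomial.natDegree_X_sub_C]
    rw [Finset.sum_const, smul_eq_mul, mul_one, hcard]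
  have hpm : (Bn n).charpoly.Monic := (Bn n).charpoly_monic
  have hpd : (Bn n).charpoly.natDegree = n := by
    rw [Matrix.charpoly_natDegree_eq_dim]; simp
  obtain ⟨c, hc⟩ := hdvd
  have hcne : c ≠ 0 := by
    rintro rfl
    rw [mul_zero] at hc
    exact hpm.ne_zero hc
  have hcmon : c.Monic := by
    have := congrArg Polynomial.leadingCoeff hc
    rw [Polynomial.leadingCoeff_mul, hpm.leadingCoeff, hPmon.leadingCoeff, one_mul] at this
    exact this.symm
  have hcdeg : c.natDegree = 0 := by
    have := congrArg Polynomial.natDegree hc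
    rw [Polynomial.natDegree_mul hPmon.ne_zero hcne, hpd, hPdeg] at this
    omega
  have : c = 1 := hcmon.natDegree_eq_zero.mp hcdeg
  rw [hc, this, mul_one]

end PancakeQuotientSpectrum
end

section
/- Let n ≥ 2 and let r be an integer with 1 ≤ r and n − 2r ≥ 1. Define the vector v ∈ ℚⁿ by v_i = 0 for 1 ≤ i ≤ r−1, v_r = n−2r, v_i = −1 for r+1 ≤ i ≤ n−r, and v_i = 0 for n−r+1 ≤ i ≤ n. Then B_n v = (n−r−1) v; that is, v is an eigenvector of B_n = D_n + T_n with eigenvalue n−r−1. -/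
/-- Let `n ≥ 2` and `1 ≤ r` with `n − 2r ≥ 1`.  The vector `v` with
(one-based) entries `v_i = 0` for `i ≤ r−1`, `v_r = n−2r`, `v_i = −1` for
`r+1 ≤ i ≤ n−r`, and `v_i = 0` for `i ≥ n−r+1`, is an eigenvector of `B_n` with
eigenvalue `n−r−1`. -/
theorem stmt4 (n r : ℕ) (hn : 2 ≤ n) (hr : 1 ≤ r) (hnr : 2 * r + 1 ≤ n) :
    (Bn n).mulVec (fun i : Fin n =>
        if i.val + 1 < r then 0
        else if i.val + 1 = r then (n : ℚ) - 2 * r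
        else if i.val + 1 ≤ n - r then -1 else 0)
      = ((n : ℚ) - r - 1) • (fun i : Fin n =>
        if i.val + 1 < r then 0
        else if i.val + 1 = r then (n : ℚ) - 2 * r
        else if i.val + 1 ≤ n - r then -1 else 0) := by
  set f : ℕ → ℚ := fun j =>
    if j + 1 < r then 0
    else if j + 1 = r then (n : ℚ) - 2 * r
    else if j + 1 ≤ n - r then -1 else 0 with hf
  have hcnr : ((n - r : ℕ) : ℚ) = (n : ℚ) - r := by
    have : r ≤ n := by omega
    push_cast [this]; ring
  -- the partial tail sums of f
  have key : ∀ k a, a + k = n →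
      ∑ j ∈ Finset.Ico a n, f j
        = if r ≤ a ∧ a ≤ n - r then (a : ℚ) - ((n : ℚ) - r) else 0 := by
    intro k
    induction k with
    | zero =>
      intro a ha
      have : a = n := by omega
      subst this
      simp only [Finset.Ico_self, Finset.sum_empty]
      rw [if_neg (by omega)]
    | succ k ih =>
      intro a ha
      have h1 : a < n := by omega
      rw [Finset.sum_eq_sum_Ico_succ_bot h1, ih (a + 1) (by omega)]
      simp only [hf]
      have hr2 : r ≤ n - r := by omega
      split_ifs <;>
        first
        | (exfalso; omega)
        | (push_cast; ring1)
        | (have h2 : (a : ℚ) + 1 = r := by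
             exact_mod_cast congrArg (Nat.cast : ℕ → ℚ) (by omega : a + 1 = r)
           push_cast; linarith)
        | (have h2 : (a : ℚ) = (n : ℚ) - r := by
             rw [(by omega : a = n - r)]; exact hcnr
           push_cast; linarith)
  have hv : (fun i : Fin n =>
        if i.val + 1 < r then (0 : ℚ)
        else if i.val + 1 = r then (n : ℚ) - 2 * r
        else if i.val + 1 ≤ n - r then -1 else 0) = fun j : Fin n => f j.val := rfl
  rw [hv]
  funext i
  have hi := i.isLt
  rw [Bn]
  simp only [Matrix.add_mulVec, Pi.add_apply, Matrix.mulVec_diagonal,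
    Pi.smul_apply, smul_eq_mul]
  have hT : Matrix.mulVec (Matrix.of fun i j : Fin n =>
      if n ≤ i.val + j.val + 1 then (1 : ℚ) else 0) (fun j : Fin n => f j.val) i
      = ∑ j ∈ Finset.Ico (n - 1 - i.val) n, f j := by
    rw [Matrix.mulVec, dotProduct]
    simp only [Matrix.of_apply, ite_mul, one_mul, zero_mul]
    rw [Fin.sum_univ_eq_sum_range
      (fun j => (if n ≤ i.val + j + 1 then f j else 0)) n]
    rw [Finset.range_eq_Ico,
      ← Finset.sum_Ico_consecutive _ (Nat.zero_le (n - 1 - i.val)) (by omega : n - 1 - i.val ≤ n)]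
    have e1 : ∑ j ∈ Finset.Ico 0 (n - 1 - i.val),
        (if n ≤ i.val + j + 1 then f j else 0) = 0 :=
      Finset.sum_eq_zero (fun j hj => by
        rw [Finset.mem_Ico] at hj; rw [if_neg (by omega)])
    have e2 : ∑ j ∈ Finset.Ico (n - 1 - i.val) n,
        (if n ≤ i.val + j + 1 then f j else 0) = ∑ j ∈ Finset.Ico (n - 1 - i.val) n, f j :=
      Finset.sum_congr rfl (fun j hj => by
        rw [Finset.mem_Ico] at hj; rw [if_pos (by omega)])
    rw [e1, e2, zero_add]
  rw [hT, key (i.val + 1) (n - 1 - i.val) (by omega)]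
  have hs : ((n - 1 - i.val : ℕ) : ℚ) = (n : ℚ) - 1 - i.val := by
    rw [Nat.sub_sub, Nat.cast_sub (by omega : 1 + i.val ≤ n)]
    push_cast; ring
  rw [hs]
  simp only [hf]
  have hr2 : r ≤ n - r := by omega
  split_ifs <;>
    first
    | (exfalso; omega)
    | (push_cast; ring1)
    | (have h2 : (i.val : ℚ) + 1 = r := by
         exact_mod_cast congrArg (Nat.cast : ℕ → ℚ) (by omega : i.val + 1 = r)
       linear_combination (2 * (r : ℚ) - n - 1) * h2)
end

section
/- Let n ≥ 2 and let r be an integer with 1 ≤ r ≤ ⌊n/2⌋. Define the vector w ∈ ℚⁿ by w_i = 0 for 1 ≤ i ≤ r−1, w_i = −1 for r ≤ i ≤ n−r, w_{n−r+1} = n−2r+1, and w_i = 0 for n−r+2 ≤ i ≤ n. Then B_n w = (r−2) w; that is, w is an eigenvector of B_n = D_n + T_n with eigenvalue r−2. -/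
/-!
Row `i` of `T_n` picks out a tail, so `(B_n w)_i = (n-2-i) w_i + ∑_{j ≥ n-1-i} w_j`
(zero-based). The entries of `w` telescope: `w_j = S_j - S_{j+1}` where `S_k = k + 1 - r`
on the window `r - 1 ≤ k ≤ n - r` and `S_k = 0` outside it, so the tail sums are the `S_k`.
The eigenvalue equation `(n-2-i) w_i + S_{n-1-i} = (r-2) w_i` is then checked separately
on the four pieces of `w`.
-/

open Finset Matrix

lemma Bn_mulVec_apply (n : ℕ) (v : ℕ → ℚ) (i : Fin n) :
    (Bn n *ᵥ fun j : Fin n => v j) i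
      = ((n : ℚ) - 2 - i) * v i + ∑ j ∈ Ico (n - 1 - i) n, v j := by
  have hT : ∑ j : Fin n, (if n ≤ i.val + j.val + 1 then (1 : ℚ) else 0) * v j
      = ∑ j ∈ Ico (n - 1 - i) n, v j := by
    rw [Fin.sum_univ_eq_sum_range (fun j => (if n ≤ i.val + j + 1 then (1 : ℚ) else 0) * v j),
      ← sum_range_add_sum_Ico _ (by omega : n - 1 - i ≤ n)]
    have hlow : ∀ j ∈ range (n - 1 - i),
        (if n ≤ i.val + j + 1 then (1 : ℚ) else 0) * v j = 0 := fun j hj => by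
      rw [if_neg (by simp only [mem_range] at hj; omega), zero_mul]
    have hhigh : ∀ j ∈ Ico (n - 1 - i) n,
        (if n ≤ i.val + j + 1 then (1 : ℚ) else 0) * v j = v j := fun j hj => by
      rw [if_pos (by simp only [mem_Ico] at hj; omega), one_mul]
    rw [sum_congr rfl hlow, sum_congr rfl hhigh, sum_const_zero, zero_add]
  rw [Bn, add_mulVec, Pi.add_apply, mulVec_diagonal, ← hT]
  rfl

lemma sum_Ico_eq_sub_of_eq_sub {S v : ℕ → ℚ} {k n : ℕ} (hkn : k ≤ n)
    (hv : ∀ j, v j = S j - S (j + 1)) :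
    ∑ j ∈ Ico k n, v j = S k - S n := by
  rw [← neg_sub, ← sum_Ico_sub S hkn, ← sum_neg_distrib]
  simp only [hv, neg_sub]

/-- The vector `w` of the statement, with zero-based index `j`. -/
def pancakeEigvec (n r j : ℕ) : ℚ :=
  if j + 1 < r then 0
  else if j + 1 ≤ n - r then -1
  else if j + 1 = n - r + 1 then (n : ℚ) - 2 * r + 1 else 0

def pancakeEigvecTail (n r k : ℕ) : ℚ :=
  if r ≤ k + 1 ∧ k ≤ n - r then (k : ℚ) + 1 - r else 0

lemma pancakeEigvec_eq_sub {n r : ℕ} (hrn : r ≤ n) (j : ℕ) :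
    pancakeEigvec n r j = pancakeEigvecTail n r j - pancakeEigvecTail n r (j + 1) := by
  obtain ⟨m, rfl⟩ : ∃ m, n = m + r := ⟨n - r, by omega⟩
  unfold pancakeEigvec pancakeEigvecTail
  simp only [Nat.add_sub_cancel]
  obtain h | rfl | h | rfl | h :
      j + 2 < r ∨ r = j + 2 ∨ (r ≤ j + 1 ∧ j < m) ∨ j = m ∨ m < j := by omega
  all_goals split_ifs <;> first | omega | (push_cast; ring)

lemma sum_Ico_pancakeEigvec {n r : ℕ} (hr : 1 ≤ r) (hrn : r ≤ n) {k : ℕ} (hk : k ≤ n) :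
    ∑ j ∈ Ico k n, pancakeEigvec n r j = pancakeEigvecTail n r k := by
  have hS : pancakeEigvecTail n r n = 0 := if_neg (by omega)
  rw [sum_Ico_eq_sub_of_eq_sub hk (pancakeEigvec_eq_sub hrn), hS, sub_zero]

lemma pancakeEigvec_eigen {n r : ℕ} (hr : 1 ≤ r) (hrn : 2 * r ≤ n) {i : ℕ} (hi : i < n) :
    ((n : ℚ) - 2 - i) * pancakeEigvec n r i + pancakeEigvecTail n r (n - 1 - i)
      = ((r : ℚ) - 2) * pancakeEigvec n r i := by
  obtain ⟨k, rfl⟩ : ∃ k, n = i + 1 + k := ⟨n - 1 - i, by omega⟩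
  unfold pancakeEigvec pancakeEigvecTail
  simp only [show i + 1 + k - 1 - i = k by omega]
  obtain h | h | rfl | h :
      i + 1 < r ∨ (r ≤ i + 1 ∧ i + 1 ≤ i + 1 + k - r) ∨ r = k + 1 ∨ k + 1 < r := by omega
  all_goals split_ifs <;> first | omega | (push_cast; ring)

theorem stmt5_general (n r : ℕ) (hr : 1 ≤ r) (hrn : r ≤ n / 2) :
    (Bn n).mulVec (fun i : Fin n =>
        if i.val + 1 < r then 0
        else if i.val + 1 ≤ n - r then -1
        else if i.val + 1 = n - r + 1 then (n : ℚ) - 2 * r + 1 else 0)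
      = ((r : ℚ) - 2) • (fun i : Fin n =>
        if i.val + 1 < r then 0
        else if i.val + 1 ≤ n - r then -1
        else if i.val + 1 = n - r + 1 then (n : ℚ) - 2 * r + 1 else 0) := by
  have h2r : 2 * r ≤ n := by omega
  change Bn n *ᵥ (fun i : Fin n => pancakeEigvec n r i)
    = ((r : ℚ) - 2) • fun i : Fin n => pancakeEigvec n r i
  funext i
  rw [Bn_mulVec_apply, sum_Ico_pancakeEigvec hr (by omega) (by omega), Pi.smul_apply, smul_eq_mul]
  exact pancakeEigvec_eigen hr h2r i.isLt

/-- Let `n ≥ 2` and `1 ≤ r ≤ ⌊n/2⌋`.  The vector `w` with (one-based)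
entries `w_i = 0` for `i ≤ r−1`, `w_i = −1` for `r ≤ i ≤ n−r`, `w_{n−r+1} = n−2r+1`,
and `w_i = 0` for `i ≥ n−r+2`, is an eigenvector of `B_n` with eigenvalue `r−2`. -/
theorem stmt5 (n r : ℕ) (hn : 2 ≤ n) (hr : 1 ≤ r) (hrn : r ≤ n / 2) :
    (Bn n).mulVec (fun i : Fin n =>
        if i.val + 1 < r then 0
        else if i.val + 1 ≤ n - r then -1
        else if i.val + 1 = n - r + 1 then (n : ℚ) - 2 * r + 1 else 0)
      = ((r : ℚ) - 2) • (fun i : Fin n =>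
        if i.val + 1 < r then 0
        else if i.val + 1 ≤ n - r then -1
        else if i.val + 1 = n - r + 1 then (n : ℚ) - 2 * r + 1 else 0) :=
  stmt5_general n r hr hrn
end

section
/- For every n ≥ 2, the eigenvalue −1 of the adjacency matrix of the pancake graph P(n) (over ℝ) has multiplicity at least n−1; that is, the eigenspace {x : A x = −x} of the adjacency matrix A of P(n) has dimension at least n−1. -/
/-!
The neighbours `g ρ_r` (`r = 2, …, n`) of a vertex `g` carry in their last position exactly the
letters `g i` with `i` not the last position, each once. Hence for `f : Fin n → ℝ` the vector
`x g = f (g last)` satisfies `(A x) g = ∑ f - x g`, so `x` is a `-1`-eigenvector whenever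
`∑ f = 0`, and `f ↦ x` embeds this `(n - 1)`-dimensional space into the eigenspace.
-/

/-- The underlying function of the suffix reversal `ρ_r`. -/
def rhoFun (n r : ℕ) (i : Fin n) : Fin n :=
  if _h : n < r ∨ i.val < n - r then i else ⟨2 * n - r - 1 - i.val, by omega⟩

theorem rhoFun_involutive (n r : ℕ) : Function.Involutive (rhoFun n r) := by
  intro i
  by_cases h : n < r ∨ i.val < n - r
  · have h1 : rhoFun n r i = i := by rw [rhoFun, dif_pos h]
    rw [h1, h1]
  · push_neg at h
    have h1 : rhoFun n r i = ⟨2 * n - r - 1 - i.val, by omega⟩ := by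
      rw [rhoFun, dif_neg (by omega)]
    rw [h1, rhoFun, dif_neg (by simp; omega)]
    exact Fin.ext (by simp; omega)

/-- The suffix reversal `ρ_r` of `{1,…,n}` (modelled on `Fin n`, zero-based): it fixes
every position `i ≤ n−r` (one-based) and reverses the last `r` positions. -/
def rho (n r : ℕ) : Equiv.Perm (Fin n) := (rhoFun_involutive n r).toPerm

open scoped Classical in
/-- The adjacency matrix over `ℝ` of the pancake graph `P(n)`: the vertices are the
permutations of `{1,…,n}` and `g` is adjacent to `g∘ρ_r` for every `r = 2,…,n`. -/
noncomputable def pancakeAdj (n : ℕ) :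
    Matrix (Equiv.Perm (Fin n)) (Equiv.Perm (Fin n)) ℝ :=
  Matrix.of fun g h => if ∃ r ∈ Finset.Icc 2 n, h = g * rho n r then 1 else 0

open Finset Module Module.End Equiv Matrix

lemma rho_apply_last {m r : ℕ} (hr : 1 ≤ r) (hrm : r ≤ m + 1) :
    (rho (m + 1) r (Fin.last m) : ℕ) = m + 1 - r := by
  change (rhoFun (m + 1) r (Fin.last m) : ℕ) = _
  rw [rhoFun, dif_neg (by simp; omega)]
  change 2 * (m + 1) - r - 1 - m = m + 1 - r
  omega

lemma rho_injOn (n : ℕ) : Set.InjOn (rho n) (Set.Icc 1 n) := by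
  intro r ⟨hr1, hrn⟩ s ⟨hs1, hsn⟩ hrs
  obtain ⟨m, rfl⟩ : ∃ m, n = m + 1 := ⟨n - 1, by omega⟩
  have := congrArg (fun σ : Perm (Fin (m + 1)) => (σ (Fin.last m) : ℕ)) hrs
  simp only [rho_apply_last hr1 hrn, rho_apply_last hs1 hsn] at this
  omega

lemma sum_Icc_rho_apply_last {M : Type*} [AddCommMonoid M] (m : ℕ) (φ : Fin (m + 1) → M) :
    ∑ r ∈ Icc 1 (m + 1), φ (rho (m + 1) r (Fin.last m)) = ∑ i, φ i := by
  refine sum_nbij' (fun r => rho (m + 1) r (Fin.last m)) (fun i => m + 1 - i) (by simp)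
    (fun i _ => by simp; omega) (fun r hr => ?_) (fun i _ => Fin.ext ?_) (fun _ _ => rfl)
  · obtain ⟨hr1, hrm⟩ := mem_Icc.1 hr
    rw [rho_apply_last hr1 hrm]
    omega
  · rw [rho_apply_last (by omega) (by omega)]
    omega

lemma sum_Icc_two_rho_apply_last_add {M : Type*} [AddCommMonoid M] (m : ℕ)
    (φ : Fin (m + 1) → M) :
    ∑ r ∈ Icc 2 (m + 1), φ (rho (m + 1) r (Fin.last m)) + φ (Fin.last m) = ∑ i, φ i := by
  have h1 : rho (m + 1) 1 (Fin.last m) = Fin.last m :=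
    Fin.ext (by rw [rho_apply_last le_rfl (by omega)]; simp)
  rw [← sum_Icc_rho_apply_last m φ, ← insert_Icc_add_one_left_eq_Icc (show 1 ≤ m + 1 by omega),
    sum_insert (by simp), h1, add_comm]
  rfl

lemma pancakeAdj_mulVec_apply (n : ℕ) (x : Perm (Fin n) → ℝ) (g : Perm (Fin n)) :
    (pancakeAdj n *ᵥ x) g = ∑ r ∈ Icc 2 n, x (g * rho n r) := by
  have hinj : Set.InjOn (fun r => g * rho n r) (Icc 2 n) := fun r hr s hs h =>
    rho_injOn n (by simp at hr ⊢; omega) (by simp at hs ⊢; omega) (mul_left_cancel h)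
  rw [← sum_image hinj, mulVec, dotProduct]
  simp only [pancakeAdj, of_apply, ite_mul, one_mul, zero_mul, ← sum_filter]
  congr 1
  ext h
  simp [eq_comm]

theorem pancakeAdj_mulVec_comp_apply_last (m : ℕ) (f : Fin (m + 1) → ℝ) :
    pancakeAdj (m + 1) *ᵥ (fun g => f (g (Fin.last m))) =
      fun g => (∑ i, f i) - f (g (Fin.last m)) := by
  funext g
  rw [pancakeAdj_mulVec_apply, ← Equiv.sum_comp g f,
    ← sum_Icc_two_rho_apply_last_add m (fun i => f (g i)), add_sub_cancel_right]
  rfl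

theorem comp_apply_last_mem_eigenspace_neg_one (m : ℕ) {f : Fin (m + 1) → ℝ}
    (hf : ∑ i, f i = 0) :
    (fun g : Perm (Fin (m + 1)) => f (g (Fin.last m))) ∈
      eigenspace (mulVecLin (pancakeAdj (m + 1))) (-1) := by
  rw [mem_eigenspace_iff, mulVecLin_apply, pancakeAdj_mulVec_comp_apply_last, hf]
  funext g
  simp

theorem stmt8_general (n : ℕ) :
    n - 1 ≤ Module.finrank ℝ
      (Module.End.eigenspace (Matrix.mulVecLin (pancakeAdj n)) (-1)) := by
  obtain _ | m := n
  · simp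
  let S : Dual ℝ (Fin (m + 1) → ℝ) := ∑ i, LinearMap.proj i
  have hS (f : Fin (m + 1) → ℝ) : S f = ∑ i, f i := by simp [S]
  have hS_ne : S ≠ 0 := fun h => by simpa [hS] using LinearMap.congr_fun h (Pi.single 0 1)
  let Φ := (LinearMap.funLeft ℝ ℝ fun g : Perm (Fin (m + 1)) => g (Fin.last m)).domRestrict
    (LinearMap.ker S)
  have hΦ_inj : Function.Injective Φ :=
    (LinearMap.funLeft_injective_of_surjective ℝ ℝ _ fun i =>
      ⟨swap (Fin.last m) i, swap_apply_left _ _⟩).comp Subtype.val_injective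
  have hΦ_range : LinearMap.range Φ ≤ eigenspace (mulVecLin (pancakeAdj (m + 1))) (-1) := by
    rintro _ ⟨⟨f, hf⟩, rfl⟩
    exact comp_apply_last_mem_eigenspace_neg_one m ((hS f).symm.trans hf)
  calc m + 1 - 1 = finrank ℝ (LinearMap.ker S) := by
        have := S.finrank_ker_add_one_of_ne_zero hS_ne
        rw [finrank_fin_fun] at this
        omega
    _ = finrank ℝ (LinearMap.range Φ) := (LinearMap.finrank_range_of_inj hΦ_inj).symm
    _ ≤ _ := Submodule.finrank_mono hΦ_range

/-- For every `n ≥ 2`, the eigenvalue `−1` of the adjacency matrix of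
the pancake graph `P(n)` has multiplicity at least `n−1`: the eigenspace
`{x : A x = −x}` has dimension at least `n−1`. -/
theorem stmt8 (n : ℕ) (hn : 2 ≤ n) :
    n - 1 ≤ Module.finrank ℝ
      (Module.End.eigenspace (Matrix.mulVecLin (pancakeAdj n)) (-1)) :=
  stmt8_general n
end

section
/- For every n ≥ 3, the sum P(σ) + Σ_{r=2}^{n−1} P(ρ_r), where σ is the n-cycle with σ(1) = n and σ(i) = i−1 for 2 ≤ i ≤ n and ρ_2,…,ρ_{n−1} are the suffix reversals, equals D_n + C_n + T'_n, where D_n is the n×n diagonal matrix with (D_n)_{ii} = n−1−i, C_n = P(σ) is the 0/1 matrix with (C_n)_{ij} = 1 iff i − j ≡ 1 (mod n), and T'_n is the 0/1 matrix with (T'_n)_{ij} = 1 if i+j > n+1 and 0 otherwise. -/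
/-- The `n`-cycle `σ` with `σ(1) = n` and `σ(i) = i−1` for `2 ≤ i ≤ n`
(zero-based: `0 ↦ n−1` and `i ↦ i−1` for `i ≥ 1`), i.e. the inverse of `finRotate n`. -/
def sigmaCycle (n : ℕ) : Equiv.Perm (Fin n) := (finRotate n)⁻¹

/-- The permutation matrix `P(π)`, with `(P(π))_{ij} = 1` iff `π(i) = j`. -/
def Pmat (n : ℕ) (π : Equiv.Perm (Fin n)) : Matrix (Fin n) (Fin n) ℤ :=
  Matrix.of fun i j => if π i = j then 1 else 0


lemma rho_val (n r : ℕ) (hr : 2 ≤ r) (hr' : r ≤ n - 1) (hn : 3 ≤ n) (i : Fin n) :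
    (rho n r i).val = if i.val + r < n then i.val else 2 * n - r - 1 - i.val := by
  have hi := i.isLt
  show (rhoFun n r i).val = _
  rw [rhoFun]
  by_cases h : n < r ∨ i.val < n - r
  · rw [dif_pos h, if_pos (by omega)]
  · rw [dif_neg h, if_neg (by omega)]

lemma sigma_iff (n : ℕ) (hn : 3 ≤ n) (i j : Fin n) :
    sigmaCycle n i = j ↔ (i.val : ℤ) - (j.val : ℤ) ≡ 1 [ZMOD (n : ℤ)] := by
  obtain ⟨m, rfl⟩ : ∃ m, n = m + 1 := ⟨n - 1, by omega⟩
  have hi := i.isLt; have hj := j.isLt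
  rw [sigmaCycle, Equiv.Perm.inv_def, Equiv.symm_apply_eq, finRotate_succ_apply,
    Fin.ext_iff, Fin.val_add_one]
  constructor
  · intro h
    by_cases hlast : j = Fin.last m
    · rw [if_pos hlast] at h
      have hj' : j.val = m := by rw [hlast]; rfl
      rw [Int.modEq_iff_dvd]
      exact ⟨1, by push_cast; omega⟩
    · rw [if_neg hlast] at h
      rw [Int.modEq_iff_dvd]
      exact ⟨0, by push_cast; omega⟩
  · intro h
    rw [Int.modEq_iff_dvd] at h
    have h0 : (1 : ℤ) - ((i.val : ℤ) - (j.val : ℤ)) = 0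
        ∨ (1 : ℤ) - ((i.val : ℤ) - (j.val : ℤ)) = (m : ℤ) + 1 := by
      rcases lt_or_ge ((1 : ℤ) - ((i.val : ℤ) - (j.val : ℤ))) ((m : ℤ) + 1) with hlt | hge
      · left
        refine Int.eq_zero_of_abs_lt_dvd h ?_
        rw [abs_lt]
        constructor <;> push_cast <;> omega
      · right; push_cast at hge ⊢; omega
    rcases h0 with h0 | h0
    · have hij : i.val = j.val + 1 := by omega
      have hlast : j ≠ Fin.last m := by
        intro hl
        have : j.val = m := by rw [hl]; rfl
        omega
      rw [if_neg hlast]; exact hij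
    · have hij : i.val = 0 ∧ j.val = m := by omega
      have hlast : j = Fin.last m := by
        apply Fin.ext; simpa [Fin.val_last] using hij.2
      rw [if_pos hlast]; exact hij.1

/-- For `n ≥ 3`, the sum `P(σ) + ∑_{r=2}^{n−1} P(ρ_r)` equals
`D_n + C_n + T'_n`, where `D_n` is diagonal with one-based entries `n−1−i`,
`(C_n)_{ij} = 1` iff `i − j ≡ 1 (mod n)`, and `(T'_n)_{ij} = 1` iff `i + j > n + 1`
(one-based). -/
theorem stmt10 (n : ℕ) (hn : 3 ≤ n) :
    (Pmat n (sigmaCycle n) + ∑ r ∈ Finset.Icc 2 (n - 1), Pmat n (rho n r))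
      = Matrix.diagonal (fun i : Fin n => (n : ℤ) - 2 - i.val)
        + Matrix.of (fun i j : Fin n =>
            if (i.val : ℤ) - (j.val : ℤ) ≡ 1 [ZMOD (n : ℤ)] then 1 else 0)
        + Matrix.of (fun i j : Fin n => if n < i.val + j.val + 1 then 1 else 0) := by
  ext i j
  have hi := i.isLt; have hj := j.isLt
  simp only [Matrix.add_apply, Matrix.sum_apply, Pmat, Matrix.of_apply, Matrix.diagonal_apply]
  have hC : (if (i.val : ℤ) - (j.val : ℤ) ≡ 1 [ZMOD (n : ℤ)] then (1 : ℤ) else 0)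
      = (if sigmaCycle n i = j then (1 : ℤ) else 0) :=
    if_congr (sigma_iff n hn i j).symm rfl rfl
  rw [hC]
  have hterm : ∀ r ∈ Finset.Icc 2 (n - 1),
      (if rho n r i = j then (1 : ℤ) else 0)
        = (if (if i.val + r < n then i.val else 2 * n - r - 1 - i.val) = j.val then (1 : ℤ) else 0) := by
    intro r hr
    simp only [Finset.mem_Icc] at hr
    exact if_congr (by rw [Fin.ext_iff, rho_val n r hr.1 hr.2 hn i]) rfl rfl
  rw [Finset.sum_congr rfl hterm]
  have e1 : Finset.Icc 2 (n - 1) = Finset.Ioc 1 (n - 1) := by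
    ext x; simp only [Finset.mem_Icc, Finset.mem_Ioc]; omega
  have hS : (∑ r ∈ Finset.Icc 2 (n - 1),
        if (if i.val + r < n then i.val else 2 * n - r - 1 - i.val) = j.val then (1 : ℤ) else 0)
      = (if i = j then (n : ℤ) - 2 - i.val else 0)
        + (if n < i.val + j.val + 1 then (1 : ℤ) else 0) := by
    rw [e1]
    rcases Nat.lt_or_ge i.val (n - 1) with hi' | hi'
    · rw [← Finset.sum_Ioc_consecutive _ (show 1 ≤ n - 1 - i.val by omega)
        (show n - 1 - i.val ≤ n - 1 by omega)]
      have hca : ∀ r ∈ Finset.Ioc 1 (n - 1 - i.val),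
          (if (if i.val + r < n then i.val else 2 * n - r - 1 - i.val) = j.val then (1 : ℤ) else 0)
            = if i.val = j.val then (1 : ℤ) else 0 := by
        intro r hr
        simp only [Finset.mem_Ioc] at hr
        rw [if_pos (show i.val + r < n by omega)]
      have hA : (∑ r ∈ Finset.Ioc 1 (n - 1 - i.val),
            if (if i.val + r < n then i.val else 2 * n - r - 1 - i.val) = j.val then (1 : ℤ) else 0)
          = ((n - 1 - i.val - 1 : ℕ) : ℤ) * (if i.val = j.val then (1 : ℤ) else 0) := by
        rw [Finset.sum_congr rfl hca, Finset.sum_const, Nat.card_Ioc, nsmul_eq_mul]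
      have hB : (∑ r ∈ Finset.Ioc (n - 1 - i.val) (n - 1),
            if (if i.val + r < n then i.val else 2 * n - r - 1 - i.val) = j.val then (1 : ℤ) else 0)
          = if n ≤ i.val + j.val then (1 : ℤ) else 0 := by
        have hc : ∀ r ∈ Finset.Ioc (n - 1 - i.val) (n - 1),
            (if (if i.val + r < n then i.val else 2 * n - r - 1 - i.val) = j.val then (1 : ℤ) else 0)
              = if r = 2 * n - 1 - i.val - j.val then (1 : ℤ) else 0 := by
          intro r hr
          simp only [Finset.mem_Ioc] at hr
          rw [if_neg (show ¬ (i.val + r < n) by omega)]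
          exact if_congr (show 2 * n - r - 1 - i.val = j.val ↔ r = 2 * n - 1 - i.val - j.val
            by omega) rfl rfl
        rw [Finset.sum_congr rfl hc, Finset.sum_ite_eq']
        simp only [Finset.mem_Ioc]
        exact if_congr (show (n - 1 - i.val < 2 * n - 1 - i.val - j.val
          ∧ 2 * n - 1 - i.val - j.val ≤ n - 1) ↔ n ≤ i.val + j.val by omega) rfl rfl
      rw [hA, hB]
      simp only [Fin.ext_iff]
      split_ifs <;> push_cast <;> omega
    · have hc : ∀ r ∈ Finset.Ioc 1 (n - 1),
          (if (if i.val + r < n then i.val else 2 * n - r - 1 - i.val) = j.val then (1 : ℤ) else 0)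
            = if r = 2 * n - 1 - i.val - j.val then (1 : ℤ) else 0 := by
        intro r hr
        simp only [Finset.mem_Ioc] at hr
        rw [if_neg (show ¬ (i.val + r < n) by omega)]
        exact if_congr (show 2 * n - r - 1 - i.val = j.val ↔ r = 2 * n - 1 - i.val - j.val
          by omega) rfl rfl
      rw [Finset.sum_congr rfl hc, Finset.sum_ite_eq']
      simp only [Finset.mem_Ioc, Fin.ext_iff]
      split_ifs <;> push_cast <;> omega
  rw [hS]
  ring
end

section
/- For every n ≥ 3, each of the numbers n−1, n−3, and −1 is an eigenvalue of the rational n×n matrix B'_n = D_n + C_n + T'_n; that is, {n−1, n−3, −1} ⊆ spec(B'_n). -/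
/-!
Three explicit eigenvectors (indices counted from `0`, as in `Fin n`). Every row of `B'_n`
sums to `n − 1`, so the all-ones vector has eigenvalue `n − 1`. The last column of `B'_n` is
`𝟙 − e_{n−1}`, hence `B'_n (n e_{n−1} − 𝟙) = −(n e_{n−1} − 𝟙)`. Finally rows `1` and `0`
differ by `(n − 3)(e_1 − e_0)`, so `e_1 − e_0` is a left eigenvector for `n − 3`; left and
right spectra agree because `M` and `Mᵀ` have the same characteristic polynomial.
-/

/-- The quotient matrix `B'_n = D_n + C_n + T'_n` of the mixed graph `Γ(n,n,n−1)`, over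
`ℚ` (one-based index `i` corresponds to `i−1 : Fin n`): `D_n` is diagonal with entries
`n−1−i`, `(C_n)_{ij} = 1` iff `i − j ≡ 1 (mod n)`, and `(T'_n)_{ij} = 1` iff
`i + j > n + 1`. -/
def Bn' (n : ℕ) : Matrix (Fin n) (Fin n) ℚ :=
  Matrix.diagonal (fun i : Fin n => (n : ℚ) - 2 - i.val)
    + Matrix.of (fun i j : Fin n =>
        if (i.val : ℤ) - (j.val : ℤ) ≡ 1 [ZMOD (n : ℤ)] then 1 else 0)
    + Matrix.of (fun i j : Fin n => if n < i.val + j.val + 1 then 1 else 0)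

open Matrix Module.End

section Eigenvectors

variable {R ι : Type*} [CommRing R] [Fintype ι]

theorem hasEigenvalue_mulVecLin_of_mulVec_eq {M : Matrix ι ι R} {μ : R} {v : ι → R}
    (hv : v ≠ 0) (h : M *ᵥ v = μ • v) : HasEigenvalue M.mulVecLin μ :=
  hasEigenvalue_of_hasEigenvector ⟨mem_eigenspace_iff.2 h, hv⟩

theorem hasEigenvalue_mulVecLin_transpose_iff [IsDomain R] [DecidableEq ι] {M : Matrix ι ι R}
    {μ : R} :
    HasEigenvalue Mᵀ.mulVecLin μ ↔ HasEigenvalue M.mulVecLin μ := by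
  rw [hasEigenvalue_iff_isRoot_charpoly, hasEigenvalue_iff_isRoot_charpoly,
    charpoly_mulVecLin, charpoly_mulVecLin, charpoly_transpose]

theorem hasEigenvalue_mulVecLin_of_vecMul_eq [IsDomain R] [DecidableEq ι] {M : Matrix ι ι R}
    {μ : R} {v : ι → R} (hv : v ≠ 0) (h : v ᵥ* M = μ • v) : HasEigenvalue M.mulVecLin μ :=
  hasEigenvalue_mulVecLin_transpose_iff.1 <|
    hasEigenvalue_mulVecLin_of_mulVec_eq hv (by rwa [mulVec_transpose])

end Eigenvectors

theorem intModEq_one_iff_eq_finRotate {n : ℕ} (i j : Fin n) :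
    (i : ℤ) - j ≡ 1 [ZMOD n] ↔ i = finRotate n j := by
  obtain _ | m := n
  · exact j.elim0
  have hshift :
      (i : ℤ) - j ≡ 1 [ZMOD (m + 1 : ℕ)] ↔ (i : ℤ) ≡ (j + 1 : ℕ) [ZMOD (m + 1 : ℕ)] := by
    rw [Int.modEq_iff_dvd, Int.modEq_iff_dvd]
    push_cast
    ring_nf
  rw [hshift, Int.natCast_modEq_iff, Nat.ModEq, Nat.mod_eq_of_lt i.isLt, finRotate_apply,
    Fin.ext_iff, Fin.val_add, Fin.val_one', Nat.add_mod_mod]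

theorem Bn'_apply {n : ℕ} (i j : Fin n) :
    Bn' n i j = (if i = j then (n : ℚ) - 2 - i else 0) + (if i = finRotate n j then 1 else 0)
      + (if n < i + j + 1 then 1 else 0) := by
  simp only [Bn', Matrix.add_apply, diagonal_apply, of_apply, intModEq_one_iff_eq_finRotate]

theorem sum_ite_lt_val_add_val {n : ℕ} (i : Fin n) :
    ∑ j : Fin n, (if n < i + j + 1 then (1 : ℚ) else 0) = i := by
  rw [Fin.sum_univ_eq_sum_range (fun j => if n < i + j + 1 then (1 : ℚ) else 0),
    Finset.sum_boole]
  have hfilter : {j ∈ Finset.range n | n < i + j + 1} = Finset.Ico (n - i) n := by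
    ext j
    simp only [Finset.mem_filter, Finset.mem_range, Finset.mem_Ico]
    omega
  rw [hfilter, Nat.card_Ico, Nat.sub_sub_self i.isLt.le]

theorem Bn'_mulVec_one (n : ℕ) : Bn' n *ᵥ 1 = ((n : ℚ) - 1) • 1 := by
  ext i
  simp only [mulVec, dotProduct, Pi.one_apply, mul_one, Bn'_apply, Finset.sum_add_distrib,
    ← Equiv.symm_apply_eq, Finset.sum_ite_eq, Finset.mem_univ, if_true, sum_ite_lt_val_add_val,
    Pi.smul_apply, smul_eq_mul]
  ring

theorem Bn'_mulVec_single_last (m : ℕ) :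
    Bn' (m + 1) *ᵥ Pi.single (Fin.last m) 1 = 1 - Pi.single (Fin.last m) 1 := by
  ext i
  rw [mulVec_single_one, col_apply, Bn'_apply, finRotate_last]
  simp only [Pi.sub_apply, Pi.one_apply, Pi.single_apply, Fin.ext_iff, Fin.val_last,
    Fin.val_zero]
  split_ifs <;> first | omega | (push_cast [*]; ring)

theorem single_one_sub_single_zero_vecMul_Bn' (m : ℕ) :
    (Pi.single 1 1 - Pi.single 0 1) ᵥ* Bn' (m + 3)
      = (m : ℚ) • (Pi.single 1 1 - Pi.single 0 1) := by
  have hrot_one (j : Fin (m + 3)) : 1 = finRotate (m + 3) j ↔ 0 = j := by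
    rw [← finRotate_apply_zero, (finRotate _).injective.eq_iff]
  have hrot_zero (j : Fin (m + 3)) : 0 = finRotate (m + 3) j ↔ Fin.last _ = j := by
    rw [← finRotate_last, (finRotate _).injective.eq_iff]
  ext j
  rw [sub_vecMul, single_one_vecMul, single_one_vecMul]
  simp only [Pi.sub_apply, row_apply, Bn'_apply, hrot_one, hrot_zero, Pi.smul_apply, smul_eq_mul,
    Pi.single_apply, Fin.ext_iff, Fin.val_last, Fin.val_zero, Fin.val_one, Nat.cast_add,
    Nat.cast_ofNat, Nat.cast_one, Nat.cast_zero]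
  grind

theorem hasEigenvalue_Bn'_sub_one {n : ℕ} (hn : n ≠ 0) :
    HasEigenvalue (Bn' n).mulVecLin ((n : ℚ) - 1) :=
  hasEigenvalue_mulVecLin_of_mulVec_eq (Function.ne_iff.2 ⟨⟨0, by omega⟩, one_ne_zero⟩)
    (Bn'_mulVec_one n)

theorem hasEigenvalue_Bn'_neg_one {n : ℕ} (hn : 2 ≤ n) :
    HasEigenvalue (Bn' n).mulVecLin (-1) := by
  obtain ⟨m, rfl⟩ := Nat.exists_eq_add_one_of_ne_zero (by omega : n ≠ 0)
  set e : Fin (m + 1) → ℚ := Pi.single (Fin.last m) 1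
  have hv : ((m + 1 : ℕ) : ℚ) • e - 1 ≠ 0 :=
    Function.ne_iff.2 ⟨Fin.last m, by simpa [e] using show m ≠ 0 by omega⟩
  refine hasEigenvalue_mulVecLin_of_mulVec_eq hv ?_
  rw [mulVec_sub, mulVec_smul, Bn'_mulVec_single_last, Bn'_mulVec_one]
  module

theorem hasEigenvalue_Bn'_sub_three {n : ℕ} (hn : 3 ≤ n) :
    HasEigenvalue (Bn' n).mulVecLin ((n : ℚ) - 3) := by
  obtain ⟨m, rfl⟩ := Nat.exists_eq_add_of_le' hn
  have hv : (Pi.single 1 1 - Pi.single 0 1 : Fin (m + 3) → ℚ) ≠ 0 :=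
    Function.ne_iff.2 ⟨1, by simp⟩
  rw [show ((m + 3 : ℕ) : ℚ) - 3 = m by push_cast; ring]
  exact hasEigenvalue_mulVecLin_of_vecMul_eq hv (single_one_sub_single_zero_vecMul_Bn' m)

/-- For every `n ≥ 3`, each of `n−1`, `n−3` and `−1` is an eigenvalue
of the rational matrix `B'_n`. -/
theorem stmt11 (n : ℕ) (hn : 3 ≤ n) :
    Module.End.HasEigenvalue (Matrix.mulVecLin (Bn' n)) ((n : ℚ) - 1)
      ∧ Module.End.HasEigenvalue (Matrix.mulVecLin (Bn' n)) ((n : ℚ) - 3)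
      ∧ Module.End.HasEigenvalue (Matrix.mulVecLin (Bn' n)) (-1) :=
  ⟨hasEigenvalue_Bn'_sub_one (by omega), hasEigenvalue_Bn'_sub_three hn,
    hasEigenvalue_Bn'_neg_one (by omega)⟩
end

section
/- Let G be a finite group, S a finite subset of G, and let A be the adjacency matrix of the Cayley digraph Cay(G,S) over ℂ, i.e., the G×G matrix with A_{g,h} = 1 if h·g⁻¹ ∈ S and A_{g,h} = 0 otherwise. Then for every d ≥ 1 and every representation ρ : G → GL_d(ℂ) (a multiplicative homomorphism into invertible d×d complex matrices), every eigenvalue of the matrix Σ_{s∈S} ρ(s) is an eigenvalue of A. -/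
open scoped Matrix


/-- Let `G` be a finite group, `S ⊆ G` finite, and `A` the adjacency
matrix over `ℂ` of the Cayley digraph `Cay(G,S)` (arcs `g → s·g`, so `A_{g,h} = 1` iff
`h·g⁻¹ ∈ S`).  Then for every `d ≥ 1` and every representation
`ρ : G → GL_d(ℂ)`, every eigenvalue of `∑_{s∈S} ρ(s)` is an eigenvalue of `A`. -/
theorem stmt16 {G : Type*} [Group G] [Fintype G] [DecidableEq G] (S : Finset G)
    (d : ℕ) (hd : 1 ≤ d) (ρ : G →* Matrix.GeneralLinearGroup (Fin d) ℂ) (lam : ℂ)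
    (hlam : Module.End.HasEigenvalue
      (Matrix.mulVecLin (∑ s ∈ S, ((ρ s : Matrix (Fin d) (Fin d) ℂ)))) lam) :
    Module.End.HasEigenvalue
      (Matrix.mulVecLin
        (Matrix.of fun g h : G => if h * g⁻¹ ∈ S then (1 : ℂ) else 0)) lam := by
  classical
  set M : Matrix (Fin d) (Fin d) ℂ := ∑ s ∈ S, ((ρ s : Matrix (Fin d) (Fin d) ℂ)) with hM
  obtain ⟨v, hv⟩ := hlam.exists_hasEigenvector
  have hv0 : v ≠ 0 := hv.2
  have hveq : M.mulVec v = lam • v := by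
    have := hv.apply_eq_smul
    simpa [Matrix.mulVecLin_apply] using this
  -- determinant of M - lam • 1 is zero
  have hdet : (M - lam • (1 : Matrix (Fin d) (Fin d) ℂ)).det = 0 := by
    rw [← Matrix.exists_mulVec_eq_zero_iff]
    refine ⟨v, hv0, ?_⟩
    rw [Matrix.sub_mulVec, Matrix.smul_mulVec, Matrix.one_mulVec, hveq, sub_self]
  have hdetT : (M.transpose - lam • (1 : Matrix (Fin d) (Fin d) ℂ)).det = 0 := by
    have : M.transpose - lam • (1 : Matrix (Fin d) (Fin d) ℂ)
        = (M - lam • (1 : Matrix (Fin d) (Fin d) ℂ)).transpose := by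
      rw [Matrix.transpose_sub, Matrix.transpose_smul, Matrix.transpose_one]
    rw [this, Matrix.det_transpose, hdet]
  obtain ⟨w, hw0, hw⟩ := (Matrix.exists_mulVec_eq_zero_iff).mpr hdetT
  have hwM : M.vecMul w = lam • w := by
    rw [Matrix.sub_mulVec, Matrix.smul_mulVec, Matrix.one_mulVec, sub_eq_zero] at hw
    rw [← Matrix.mulVec_transpose, hw]
  obtain ⟨j, hj⟩ : ∃ j, w j ≠ 0 := Function.ne_iff.mp hw0
  set v0 : Fin d → ℂ := Pi.single j 1 with hv0def
  set x : G → ℂ := fun g => w ⬝ᵥ ((ρ g : Matrix (Fin d) (Fin d) ℂ).mulVec v0) with hx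
  have hx1 : x 1 = w j := by
    simp only [hx, map_one, Units.val_one, Matrix.one_mulVec, hv0def]
    simp [dotProduct_single]
  have hx0 : x ≠ 0 := by
    intro h
    apply hj
    rw [← hx1, h]
    rfl
  refine Module.End.hasEigenvalue_of_hasEigenvector (x := x) ⟨Module.End.mem_eigenspace_iff.mpr ?_, hx0⟩
  funext g
  have key : ∀ g : G,
      (Matrix.of fun g h : G => if h * g⁻¹ ∈ S then (1 : ℂ) else 0).mulVec x g
        = ∑ s ∈ S, x (s * g) := by
    intro g
    have h1 : (Matrix.of fun g h : G => if h * g⁻¹ ∈ S then (1 : ℂ) else 0).mulVec x g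
        = ∑ h : G, (if h * g⁻¹ ∈ S then (1 : ℂ) else 0) * x h := by
      simp [Matrix.mulVec, dotProduct]
    rw [h1]
    have h2 : (∑ h : G, (if h * g⁻¹ ∈ S then (1 : ℂ) else 0) * x h)
        = ∑ k : G, (if k ∈ S then (1 : ℂ) else 0) * x (k * g) :=
      Fintype.sum_equiv (Equiv.mulRight g).symm _ _ (by intro h; simp)
    rw [h2]
    simp [ite_mul, Finset.sum_ite_mem]
  have keyx : ∀ s g : G, x (s * g) = w ⬝ᵥ ((ρ s : Matrix (Fin d) (Fin d) ℂ)).mulVec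
      (((ρ g : Matrix (Fin d) (Fin d) ℂ)).mulVec v0) := by
    intro s g
    simp [hx, map_mul, Matrix.mulVec_mulVec, Units.val_mul]
  show (Matrix.of fun g h : G => if h * g⁻¹ ∈ S then (1 : ℂ) else 0).mulVec x g = (lam • x) g
  rw [key g]
  have : ∑ s ∈ S, x (s * g)
      = w ⬝ᵥ M.mulVec ((ρ g : Matrix (Fin d) (Fin d) ℂ).mulVec v0) := by
    have hsum : M.mulVec ((ρ g : Matrix (Fin d) (Fin d) ℂ).mulVec v0)
        = ∑ s ∈ S, (ρ s : Matrix (Fin d) (Fin d) ℂ).mulVec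
            ((ρ g : Matrix (Fin d) (Fin d) ℂ).mulVec v0) := by
      ext i
      rw [hM]
      simp only [Matrix.mulVec, dotProduct, Finset.sum_apply, Matrix.sum_apply,
        Finset.sum_mul]
      rw [Finset.sum_comm]
    have hds : w ⬝ᵥ (∑ s ∈ S, (ρ s : Matrix (Fin d) (Fin d) ℂ).mulVec
          ((ρ g : Matrix (Fin d) (Fin d) ℂ).mulVec v0))
        = ∑ s ∈ S, w ⬝ᵥ (ρ s : Matrix (Fin d) (Fin d) ℂ).mulVec
            ((ρ g : Matrix (Fin d) (Fin d) ℂ).mulVec v0) := by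
      simp only [dotProduct, Finset.sum_apply, Finset.mul_sum]
      rw [Finset.sum_comm]
    rw [hsum, hds]
    exact Finset.sum_congr rfl fun s _ => keyx s g
  rw [this, Matrix.dotProduct_mulVec, hwM]
  simp [hx, smul_dotProduct, Matrix.dotProduct_mulVec, Matrix.smul_vecMul]
end
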